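/- arXiv:2409.07425 — 7 statements merged into one kernel-verified Lean document; each statement's English description precedes it below -/
import Mathlib

section
/- Let H be a real Hilbert space and (P_t)_{t≥0} a strongly continuous semigroup of self-adjoint continuous linear operators on H. If P_{t₀} is a compact operator for some t₀ > 0, then P_t is a compact operator for every t > 0; moreover there exist an index set ι, a Hilbert (orthonormal) basis (φ_i)_{i∈ι} of H and real numbers (λ_i)_{i∈ι} such that P_t φ_i = exp(−λ_i t) · φ_i for every i ∈ ι and every t ≥ 0. -/
open scoped RealInnerProductSpace NNReal
open Set Module End

/-!
Writing `P t = P (t/2) ∘ P (t/2)` with `P (t/2)` self-adjoint gives `⟪P t x, x⟫ = ‖P (t/2) x‖²`,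
so every `P t` is positive, `P t x = 0` forces `P (t/2) x = 0` (iterating, `x = P 0 x = 0` by strong
continuity), and `‖P (t/2) x‖² ≤ ‖P t x‖ ‖x‖` makes `P (t/2)` compact as soon as `P t` is. Halving
`t₀` down to some `s < t` and writing `P t = P (t - s) ∘ P s` gives compactness of `P t`.

The spectral theorem for the compact, injective, self-adjoint `P t₀` yields a Hilbert basis of
eigenvectors, with eigenvalues `μ > 0` by positivity. For such an eigenvector `φ`, the times `u` at
which `P u φ = μ ^ (u / t₀) • φ` form a closed additive submonoid of `ℝ≥0` which is stable under
halving, because if the square of a positive operator maps `φ` to `r² • φ` with `r > 0`, the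
operator itself maps `φ` to `r • φ`. Such a submonoid contains arbitrarily small positive elements
and so is everything.
-/

theorem TotallyBounded.image_of_forall_dist_lt {α β γ : Type*} [PseudoMetricSpace β]
    [PseudoMetricSpace γ] {s : Set α} {f : α → β} {g : α → γ} (hg : TotallyBounded (g '' s))
    (hfg : ∀ ε > 0, ∃ δ > 0, ∀ x ∈ s, ∀ y ∈ s, dist (g x) (g y) < δ → dist (f x) (f y) < ε) :
    TotallyBounded (f '' s) := by
  rw [Metric.totallyBounded_iff]
  intro ε hε
  obtain ⟨δ, hδ, hfg⟩ := hfg ε hε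
  obtain ⟨u, hus, hu, hcover⟩ := exists_subset_image_finite_and.1
    (Metric.finite_approx_of_totallyBounded hg δ hδ)
  refine ⟨f '' u, hu.image f, ?_⟩
  rintro _ ⟨x, hx, rfl⟩
  obtain ⟨_, ⟨y, hy, rfl⟩, hxy⟩ := mem_iUnion₂.1 (hcover (mem_image_of_mem g hx))
  exact mem_iUnion₂.2 ⟨f y, mem_image_of_mem f hy, hfg x hx y (hus hy) hxy⟩

namespace NNReal

theorem exists_mem_pos_lt_of_forall_half_mem {A : Set ℝ≥0} (hA : ∀ a ∈ A, a / 2 ∈ A)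
    {a : ℝ≥0} (ha : a ∈ A) (ha₀ : 0 < a) {ε : ℝ≥0} (hε : 0 < ε) :
    ∃ b ∈ A, 0 < b ∧ b < ε := by
  have hpow (n : ℕ) : a / 2 ^ n ∈ A := by
    induction n with
    | zero => simpa using ha
    | succ n ih => simpa [pow_succ, div_div] using hA _ ih
  obtain ⟨n, hn⟩ := pow_unbounded_of_one_lt (a / ε) one_lt_two
  refine ⟨a / 2 ^ n, hpow n, by positivity, ?_⟩
  rwa [div_lt_iff₀ hε, mul_comm, ← div_lt_iff₀ (by positivity)] at hn

theorem zero_mem_of_isClosed_of_forall_half_mem {A : Set ℝ≥0} (hA : IsClosed A)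
    (hhalf : ∀ a ∈ A, a / 2 ∈ A) {a : ℝ≥0} (ha : a ∈ A) : 0 ∈ A := by
  rcases eq_zero_or_pos a with rfl | ha₀
  · exact ha
  refine hA.closure_subset (Metric.mem_closure_iff.2 fun ε hε => ?_)
  obtain ⟨b, hb, -, hbε⟩ :=
    exists_mem_pos_lt_of_forall_half_mem hhalf ha ha₀ (ε := ⟨ε, hε.le⟩) hε
  refine ⟨b, hb, ?_⟩
  rw [dist_comm, NNReal.dist_eq, NNReal.coe_zero, sub_zero, NNReal.abs_eq]
  exact hbε

theorem addSubmonoid_eq_top_of_isClosed {A : AddSubmonoid ℝ≥0} (hA : IsClosed (A : Set ℝ≥0))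
    (hsmall : ∀ ε > 0, ∃ a ∈ A, 0 < a ∧ a < ε) : A = ⊤ := by
  refine eq_top_iff.2 fun t _ =>
    hA.closure_subset_iff.2 le_rfl (Metric.mem_closure_iff.2 fun ε hε => ?_)
  obtain ⟨a, haA, ha₀, haε⟩ := hsmall ⟨ε, hε.le⟩ hε
  refine ⟨⌊t / a⌋₊ • a, A.nsmul_mem haA _, ?_⟩
  have hle : ⌊t / a⌋₊ • a ≤ t := by
    rw [nsmul_eq_mul, ← le_div_iff₀ ha₀]
    exact Nat.floor_le (by positivity)
  have hlt : t < ⌊t / a⌋₊ • a + a := by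
    rw [nsmul_eq_mul, ← add_one_mul, ← div_lt_iff₀ ha₀]
    exact Nat.lt_floor_add_one _
  have hle' : ((⌊t / a⌋₊ • a : ℝ≥0) : ℝ) ≤ t := by exact_mod_cast hle
  have hlt' : (t : ℝ) < (⌊t / a⌋₊ • a : ℝ≥0) + a := by exact_mod_cast hlt
  have haε' : (a : ℝ) < ε := haε
  rw [NNReal.dist_eq, abs_lt]
  constructor <;> linarith

end NNReal

section Operators

variable {H : Type*} [NormedAddCommGroup H] [InnerProductSpace ℝ H]

theorem LinearMap.IsSymmetric.norm_apply_sq_le {S : H →ₗ[ℝ] H} (hS : S.IsSymmetric) (x : H) :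
    ‖S x‖ ^ 2 ≤ ‖S (S x)‖ * ‖x‖ := by
  rw [← real_inner_self_eq_norm_sq (S x), hS]
  exact (real_inner_le_norm x (S (S x))).trans_eq (mul_comm _ _)

theorem LinearMap.IsSymmetric.isCompactOperator_of_comp_self [CompleteSpace H]
    {S : H →L[ℝ] H} (hS : S.IsSymmetric) (h : IsCompactOperator (S ∘L S)) :
    IsCompactOperator S := by
  refine (isCompactOperator_iff_exists_mem_nhds_isCompact_closure_image _).2
    ⟨Metric.closedBall 0 1, Metric.closedBall_mem_nhds _ one_pos, ?_⟩
  refine (TotallyBounded.closure ?_).isCompact_of_isClosed isClosed_closure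
  refine (h.isCompact_closure_image_closedBall 1).totallyBounded.subset subset_closure
    |>.image_of_forall_dist_lt fun ε hε => ⟨ε ^ 2 / 2, by positivity, fun x hx y hy hxy => ?_⟩
  have hxy' : ‖x - y‖ ≤ 2 := (norm_sub_le x y).trans <| by
    linarith [mem_closedBall_zero_iff.1 hx, mem_closedBall_zero_iff.1 hy]
  rw [dist_eq_norm, ← map_sub] at hxy ⊢
  refine lt_of_pow_lt_pow_left₀ 2 hε.le ((hS.norm_apply_sq_le (x - y)).trans_lt ?_)
  calc ‖S (S (x - y))‖ * ‖x - y‖ ≤ ‖S (S (x - y))‖ * 2 := by gcongr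
    _ < ε ^ 2 / 2 * 2 := by gcongr; exact hxy
    _ = ε ^ 2 := by ring

theorem ContinuousLinearMap.exists_hilbertBasis_eigenvectors [CompleteSpace H] {T : H →L[ℝ] H}
    (hT : IsCompactOperator T) (hsymm : T.IsSymmetric) (hinj : Function.Injective T) :
    ∃ (ι : Type) (b : HilbertBasis ι ℝ H) (μ : ι → ℝ), ∀ i, T (b i) = μ i • b i := by
  have hfin (μ : ℝ) : FiniteDimensional ℝ (eigenspace (T : End ℝ H) μ) := by
    rcases eq_or_ne μ 0 with rfl | hμ
    · rw [eigenspace_zero, LinearMap.ker_eq_bot.2 hinj]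
      infer_instance
    · exact finite_dimensional_eigenspace hT μ hμ
  -- Indexing by `Fin (finrank _)` keeps the index type in `Type`, whatever the universe of `H`.
  let e (μ : ℝ) := haveI := hfin μ; stdOrthonormalBasis ℝ (eigenspace (T : End ℝ H) μ)
  let v (i : Σ μ : ℝ, Fin (finrank ℝ (eigenspace (T : End ℝ H) μ))) : H := e i.1 i.2
  have hv : Orthonormal ℝ v :=
    hsymm.orthogonalFamily_eigenspaces.orthonormal_sigma_orthonormal fun μ => (e μ).orthonormal
  have hspan : (Submodule.span ℝ (range v))ᗮ = ⊥ := by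
    refine eq_bot_iff.2 <| (Submodule.orthogonal_le ?_).trans
      (orthogonalComplement_iSup_eigenspaces_eq_bot hT hsymm).le
    refine iSup_le fun μ x hx => ?_
    have hx' : (⟨x, hx⟩ : eigenspace (T : End ℝ H) μ) ∈ Submodule.span ℝ (range (e μ)) := by
      rw [← (e μ).coe_toBasis, (e μ).toBasis.span_eq]
      trivial
    have := Submodule.mem_map_of_mem (f := (eigenspace (T : End ℝ H) μ).subtype) hx'
    rw [← Submodule.span_image] at this
    refine Submodule.span_mono ?_ this
    rintro _ ⟨_, ⟨i, rfl⟩, rfl⟩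
    exact ⟨⟨μ, i⟩, rfl⟩
  exact ⟨_, HilbertBasis.mkOfOrthogonalEqBot hv hspan, fun i => i.1, fun i => by
    simpa [v] using mem_eigenspace_iff.1 (e i.1 i.2).2⟩

theorem ContinuousLinearMap.IsPositive.apply_eq_smul_of_apply_apply_eq {S : H →L[ℝ] H}
    (hS : S.IsPositive) {x : H} {r : ℝ} (hr : 0 < r) (h : S (S x) = (r * r) • x) :
    S x = r • x := by
  set w := S x - r • x
  have hw : S w = -r • w := by
    simp only [w, map_sub, map_smul, h]
    module
  have hnonneg := hS.inner_nonneg_left w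
  rw [hw, real_inner_smul_left] at hnonneg
  have : ⟪w, w⟫ ≤ 0 := by nlinarith [real_inner_self_nonneg (x := w)]
  exact sub_eq_zero.1 (real_inner_self_nonpos.1 this)

theorem ContinuousLinearMap.IsPositive.pos_of_apply_eq_smul {S : H →L[ℝ] H} (hS : S.IsPositive)
    (hinj : Function.Injective S) {x : H} (hx : x ≠ 0) {μ : ℝ} (h : S x = μ • x) : 0 < μ := by
  refine lt_of_le_of_ne ?_ ?_
  · have := hS.inner_nonneg_left x
    rw [h, real_inner_smul_left, real_inner_self_eq_norm_sq] at this
    exact (mul_nonneg_iff_of_pos_right (by positivity)).1 this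
  · rintro rfl
    exact hx (hinj (by rw [h, zero_smul, map_zero]))

variable {P : ℝ≥0 → H →L[ℝ] H}

theorem semigroup_eq_comp_half (hPadd : ∀ s t : ℝ≥0, P (s + t) = (P s).comp (P t)) (t : ℝ≥0) :
    P t = (P (t / 2)).comp (P (t / 2)) := by
  rw [← hPadd, add_halves]

theorem isPositive_of_semigroup (hPadd : ∀ s t : ℝ≥0, P (s + t) = (P s).comp (P t))
    (hsym : ∀ t, (P t).IsSymmetric) (t : ℝ≥0) : (P t).IsPositive := by
  refine (ContinuousLinearMap.isPositive_iff _).2 ⟨hsym t, fun x => ?_⟩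
  rw [semigroup_eq_comp_half hPadd, ContinuousLinearMap.comp_apply, (hsym _).apply_clm]
  exact real_inner_self_nonneg

theorem injective_of_semigroup (hP0 : P 0 = ContinuousLinearMap.id ℝ H)
    (hPadd : ∀ s t : ℝ≥0, P (s + t) = (P s).comp (P t)) (hsym : ∀ t, (P t).IsSymmetric)
    (hcont : ∀ x : H, Continuous fun t : ℝ≥0 => P t x) (t : ℝ≥0) :
    Function.Injective (P t) := by
  refine (injective_iff_map_eq_zero _).2 fun x hx => ?_
  have hhalf : ∀ s ∈ {s | P s x = 0}, s / 2 ∈ {s | P s x = 0} := fun s hs => by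
    have : ⟪P (s / 2) x, P (s / 2) x⟫ = 0 := by
      rw [← (hsym _).apply_clm, ← ContinuousLinearMap.comp_apply,
        ← semigroup_eq_comp_half hPadd, hs, inner_zero_left]
    exact inner_self_eq_zero.1 this
  simpa [hP0] using NNReal.zero_mem_of_isClosed_of_forall_half_mem
    (isClosed_eq (hcont x) continuous_const) hhalf (a := t) hx

theorem isCompactOperator_of_semigroup [CompleteSpace H]
    (hPadd : ∀ s t : ℝ≥0, P (s + t) = (P s).comp (P t)) (hsym : ∀ t, (P t).IsSymmetric)
    {t₀ : ℝ≥0} (ht₀ : 0 < t₀) (hcomp : IsCompactOperator (P t₀)) {t : ℝ≥0} (ht : 0 < t) :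
    IsCompactOperator (P t) := by
  have hhalf : ∀ s ∈ {s | IsCompactOperator (P s)}, s / 2 ∈ {s | IsCompactOperator (P s)} :=
    fun s hs => (hsym (s / 2)).isCompactOperator_of_comp_self <| by
      rwa [← semigroup_eq_comp_half hPadd]
  obtain ⟨b, hb, -, hbt⟩ := NNReal.exists_mem_pos_lt_of_forall_half_mem hhalf hcomp ht₀ ht
  rw [← tsub_add_cancel_of_le hbt.le, hPadd]
  exact hb.clm_comp (P (t - b))

theorem apply_eq_exp_smul_of_semigroup (hP0 : P 0 = ContinuousLinearMap.id ℝ H)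
    (hPadd : ∀ s t : ℝ≥0, P (s + t) = (P s).comp (P t)) (hsym : ∀ t, (P t).IsSymmetric)
    (hcont : ∀ x : H, Continuous fun t : ℝ≥0 => P t x) {t₀ : ℝ≥0} (ht₀ : 0 < t₀) {φ : H}
    {lam : ℝ} (h : P t₀ φ = Real.exp (-lam * t₀) • φ) (t : ℝ≥0) :
    P t φ = Real.exp (-lam * t) • φ := by
  let A : AddSubmonoid ℝ≥0 :=
    { carrier := {u | P u φ = Real.exp (-lam * u) • φ}
      zero_mem' := by simp [hP0]
      add_mem' := fun {u v} hu hv => by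
        simp only [Set.mem_ofPred_eq, hPadd, ContinuousLinearMap.comp_apply] at hu hv ⊢
        rw [hv, map_smul, hu, smul_smul, ← Real.exp_add]
        push_cast
        ring_nf }
  have hclosed : IsClosed (A : Set ℝ≥0) := isClosed_eq (hcont φ) (by fun_prop)
  have hhalf : ∀ u ∈ (A : Set ℝ≥0), u / 2 ∈ (A : Set ℝ≥0) := fun u hu =>
    (isPositive_of_semigroup hPadd hsym (u / 2)).apply_eq_smul_of_apply_apply_eq
      (Real.exp_pos _) <| by
        rw [← ContinuousLinearMap.comp_apply, ← semigroup_eq_comp_half hPadd, hu, ← Real.exp_add]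
        push_cast
        ring_nf
  have htop : A = ⊤ := NNReal.addSubmonoid_eq_top_of_isClosed hclosed fun ε hε =>
    NNReal.exists_mem_pos_lt_of_forall_half_mem hhalf h ht₀ hε
  exact htop.ge (AddSubmonoid.mem_top t)

end Operators

/-- **Theorem 2.1 (main direction).** If `(P_t)_{t ≥ 0}` is a strongly continuous semigroup of
self-adjoint continuous linear operators on a real Hilbert space `H` and `P_{t₀}` is compact for
some `t₀ > 0`, then `P_t` is compact for all `t > 0` and there is a Hilbert basis of joint
eigenvectors with eigenvalues `exp (-λ_i t)`. -/
theorem stmt0 {H : Type*} [NormedAddCommGroup H] [InnerProductSpace ℝ H] [CompleteSpace H]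
    (P : ℝ≥0 → H →L[ℝ] H)
    (hP0 : P 0 = ContinuousLinearMap.id ℝ H)
    (hPadd : ∀ s t : ℝ≥0, P (s + t) = (P s).comp (P t))
    (hsym : ∀ (t : ℝ≥0) (x y : H), ⟪P t x, y⟫ = ⟪x, P t y⟫)
    (hcont : ∀ x : H, Continuous fun t : ℝ≥0 => P t x)
    (t₀ : ℝ≥0) (ht₀ : 0 < t₀) (hcomp : IsCompactOperator (P t₀)) :
    (∀ t : ℝ≥0, 0 < t → IsCompactOperator (P t)) ∧
      ∃ (ι : Type) (φ : HilbertBasis ι ℝ H) (lam : ι → ℝ),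
        ∀ (i : ι) (t : ℝ≥0), P t (φ i) = Real.exp (-(lam i) * (t : ℝ)) • φ i := by
  have hpos := isPositive_of_semigroup hPadd hsym
  have hinj := injective_of_semigroup hP0 hPadd hsym hcont
  refine ⟨fun t ht => isCompactOperator_of_semigroup hPadd hsym ht₀ hcomp ht, ?_⟩
  obtain ⟨ι, b, μ, hb⟩ :=
    ContinuousLinearMap.exists_hilbertBasis_eigenvectors hcomp (hsym t₀) (hinj t₀)
  have hμ (i : ι) : 0 < μ i :=
    (hpos t₀).pos_of_apply_eq_smul (hinj t₀) (b.orthonormal.ne_zero i) (hb i)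
  refine ⟨ι, b, fun i => -Real.log (μ i) / t₀, fun i => ?_⟩
  refine apply_eq_exp_smul_of_semigroup hP0 hPadd hsym hcont ht₀ ?_
  dsimp only
  rw [hb i, neg_div, neg_neg, div_mul_cancel₀ _ (NNReal.coe_pos.2 ht₀).ne', Real.exp_log (hμ i)]
end

section
/- Let (U, 𝒜, μ) be a σ-finite measure space and let k : U × U → ℝ be measurable with k(x,y) > 0 for (μ⊗μ)-a.e. (x,y). Let r > 0 and let φ ∈ L²(μ) with φ ≥ 0 μ-a.e., φ not equal to 0 in L²(μ), and suppose that for μ-a.e. x the function y ↦ k(x,y) φ(y) is μ-integrable with r · φ(x) = ∫ k(x,y) φ(y) dμ(y). Then φ(x) > 0 for μ-a.e. x ∈ U. -/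
open MeasureTheory
open scoped ENNReal

theorem integral_mul_pos_of_ae_pos_of_nonneg {α : Type*} [MeasurableSpace α] {μ : Measure α}
    {g f : α → ℝ} (hg : ∀ᵐ y ∂μ, 0 < g y) (hf : 0 ≤ᵐ[μ] f) (hf0 : ¬ f =ᵐ[μ] 0)
    (hgf : Integrable (fun y => g y * f y) μ) :
    0 < ∫ y, g y * f y ∂μ := by
  have hgf_nonneg : 0 ≤ᵐ[μ] fun y => g y * f y := by
    filter_upwards [hg, hf] with y hgy hfy
    exact mul_nonneg hgy.le hfy
  refine (integral_nonneg_of_ae hgf_nonneg).lt_of_ne fun hzero => hf0 ?_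
  have hgf_zero := (integral_eq_zero_iff_of_nonneg_ae hgf_nonneg hgf).mp hzero.symm
  filter_upwards [hg, hgf_zero] with y hgy hgfy
  exact (mul_eq_zero.mp hgfy).resolve_left hgy.ne'

theorem stmt4_general {U : Type*} [MeasurableSpace U] (μ : Measure U) [SigmaFinite μ]
    (k : U × U → ℝ)
    (hkpos : ∀ᵐ z ∂(μ.prod μ), 0 < k z)
    (r : ℝ) (hr : 0 < r)
    (φ : Lp ℝ 2 μ) (hφnonneg : 0 ≤ᵐ[μ] (φ : U → ℝ)) (hφne : φ ≠ 0)
    (heig : ∀ᵐ x ∂μ, Integrable (fun y => k (x, y) * φ y) μ ∧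
      r * φ x = ∫ y, k (x, y) * φ y ∂μ) :
    ∀ᵐ x ∂μ, 0 < φ x := by
  have hφ_ae_ne : ¬ (φ : U → ℝ) =ᵐ[μ] 0 := fun h => hφne (Lp.eq_zero_iff_ae_eq_zero.mpr h)
  filter_upwards [heig, Measure.ae_ae_of_ae_prod hkpos] with x ⟨hint, hx⟩ hkx
  have hpos := integral_mul_pos_of_ae_pos_of_nonneg hkx hφnonneg hφ_ae_ne hint
  rw [← hx] at hpos
  exact pos_of_mul_pos_right hpos hr.le

/-- **Key step of Theorem 2.6.** A nonnegative, nonzero `L²` eigenfunction, with positive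
eigenvalue, of an integral operator whose kernel is a.e. strictly positive, is itself
a.e. strictly positive. -/
theorem stmt4 {U : Type*} [MeasurableSpace U] (μ : Measure U) [SigmaFinite μ]
    (k : U × U → ℝ) (hk : Measurable k)
    (hkpos : ∀ᵐ z ∂(μ.prod μ), 0 < k z)
    (r : ℝ) (hr : 0 < r)
    (φ : Lp ℝ 2 μ) (hφnonneg : 0 ≤ᵐ[μ] (φ : U → ℝ)) (hφne : φ ≠ 0)
    (heig : ∀ᵐ x ∂μ, Integrable (fun y => k (x, y) * φ y) μ ∧
      r * φ x = ∫ y, k (x, y) * φ y ∂μ) :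
    ∀ᵐ x ∂μ, 0 < φ x :=
  stmt4_general μ k hkpos r hr φ hφnonneg hφne heig
end

section
/- Let (X, 𝒜, μ) be a σ-finite measure space and let T be a continuous linear operator on the real Hilbert space L²(μ) which is an integral operator with measurable kernel k : X × X → ℝ satisfying k(x,y) = k(y,x) for (μ⊗μ)-a.e. (x,y). Let p ∈ (1, ∞] and assume c_p := (∫_X ‖k(x,·)‖_{L^p(μ)}² dμ(x))^{1/2} < ∞. If φ ∈ L²(μ), ‖φ‖_{L²(μ)} = 1, r > 0 and T φ = r φ, then φ ∈ L^p(μ) and ‖φ‖_{L^p(μ)} ≤ c_p / r. -/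
/-!
Put `g = |φ|`. The eigenvalue equation and the kernel representation give
`r g(x) ≤ ∫ |k(x,y)| g(y) dμ(y)` for a.e. `x`. For `p < ∞`, pair this with a test function
`h ∈ L^{p'}`: Tonelli and Hölder in `x` give `r ∫ g h ≤ ‖h‖_{p'} ∫ g(y) ‖k(·,y)‖_p dμ(y)`, and
duality yields `r ‖g‖_p ≤ ∫ g(y) ‖k(·,y)‖_p dμ(y)`. Duality needs `‖g‖_p < ∞`, which is not
known in advance, so it is applied to the truncations of `φ` to the sets of finite measure where
`|φ| ≤ n`.
For `p = ∞`, the bound `|k(x,y)| ≤ ‖k(·,y)‖_∞` holds for a.e. `(x,y)` and suffices directly.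
By the symmetry of `k`, `‖k(·,y)‖_p = ‖k(y,·)‖_p`, so Cauchy–Schwarz bounds the last integral by
`‖φ‖₂ c_p = c_p`.
-/

open MeasureTheory Filter
open scoped ENNReal

namespace ENNReal

theorem rpow_one_div_le_of_le_mul_rpow {a C : ℝ≥0∞} {p q : ℝ} (hpq : p.HolderConjugate q)
    (ha : a ≠ ∞) (h : a ≤ C * a ^ (1 / q)) : a ^ (1 / p) ≤ C := by
  rcases eq_or_ne a 0 with rfl | ha0
  · rw [ENNReal.zero_rpow_of_pos hpq.one_div_pos]
    exact zero_le
  have hsplit : a = a ^ (1 / p) * a ^ (1 / q) := by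
    rw [← ENNReal.rpow_add _ _ ha0 ha, one_div, one_div, hpq.inv_add_inv_eq_one, ENNReal.rpow_one]
  have hq0 : a ^ (1 / q) ≠ 0 := by simp [ha0, ha, ENNReal.rpow_eq_zero_iff]
  have hqtop : a ^ (1 / q) ≠ ∞ := ENNReal.rpow_ne_top_of_nonneg hpq.symm.one_div_nonneg ha
  exact (ENNReal.mul_le_mul_iff_left hq0 hqtop).mp (hsplit.symm.trans_le h)

end ENNReal

section ProductMeasurability

variable {X Y E : Type*} [MeasurableSpace X] [MeasurableSpace Y] {μ : Measure X} [SFinite μ]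

theorem Measurable.essSup_prod_left' {f : X × Y → ℝ≥0∞} (hf : Measurable f) :
    Measurable fun y => essSup (fun x => f (x, y)) μ := by
  refine measurable_of_Iio fun c => ?_
  have hpreimage : (fun y => essSup (fun x => f (x, y)) μ) ⁻¹' Set.Iio c =
      ⋃ (q : ℚ) (_ : (Real.toNNReal q : ℝ≥0∞) < c),
        {y | μ {x | (Real.toNNReal q : ℝ≥0∞) < f (x, y)} = 0} := by
    ext y
    simp only [Set.mem_preimage, Set.mem_Iio, Set.mem_iUnion, Set.mem_ofPred_eq, exists_prop]
    constructor
    · intro hy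
      obtain ⟨q, -, hlt, hqc⟩ := ENNReal.lt_iff_exists_rat_btwn.mp hy
      exact ⟨q, hqc, measure_mono_null (fun x hx => not_le.mpr (hlt.trans hx))
        (ae_iff.mp (ENNReal.ae_le_essSup _))⟩
    · rintro ⟨q, hqc, hnull⟩
      refine (essSup_le_of_ae_le _ (ae_iff.mpr ?_)).trans_lt hqc
      simpa only [not_le] using hnull
  rw [hpreimage]
  exact .iUnion fun q => .iUnion fun _ =>
    measurable_measure_prodMk_right (measurableSet_lt measurable_const hf)
      (measurableSet_singleton 0)

variable [NormedAddCommGroup E] [MeasurableSpace E] [OpensMeasurableSpace E]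

theorem Measurable.eLpNorm_prod_left' {f : X × Y → E} (hf : Measurable f) (p : ℝ≥0∞) :
    Measurable fun y => eLpNorm (fun x => f (x, y)) p μ := by
  rcases eq_or_ne p 0 with rfl | hp0
  · simp only [eLpNorm_exponent_zero]; exact measurable_const
  rcases eq_or_ne p ∞ with rfl | hptop
  · simpa only [eLpNorm_exponent_top, eLpNormEssSup] using hf.enorm.essSup_prod_left'
  simp_rw [eLpNorm_eq_lintegral_rpow_enorm_toReal hp0 hptop]
  exact ((hf.enorm.pow_const _).lintegral_prod_left').pow_const _

theorem ae_ae_enorm_le_eLpNorm_top {ν : Measure Y} [SFinite ν] {f : X × Y → E}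
    (hf : Measurable f) :
    ∀ᵐ x ∂μ, ∀ᵐ y ∂ν, ‖f (x, y)‖ₑ ≤ eLpNorm (fun x' => f (x', y)) ∞ μ := by
  refine (Measure.ae_ae_comm (p := fun x y => ‖f (x, y)‖ₑ ≤ eLpNorm (fun x' => f (x', y)) ∞ μ)
    (measurableSet_le hf.enorm ((hf.eLpNorm_prod_left' ∞).comp measurable_snd))).mpr ?_
  exact Eventually.of_forall fun y => by
    simpa only [eLpNorm_exponent_top] using enorm_ae_le_eLpNormEssSup (fun x => f (x, y)) μ

end ProductMeasurability

section Duality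

variable {X E : Type*} [MeasurableSpace X] {μ : Measure X} [NormedAddCommGroup E]

theorem eLpNorm'_le_of_lintegral_mul_le_of_enorm_le {p q : ℝ} (hpq : p.HolderConjugate q)
    {C : ℝ≥0∞} {f g : X → E} (hg : StronglyMeasurable g) (hgf : ∀ x, ‖g x‖ₑ ≤ ‖f x‖ₑ)
    (hg_fin : ∫⁻ x, ‖g x‖ₑ ^ p ∂μ ≠ ∞)
    (hC : ∀ h : X → ℝ≥0∞, Measurable h → eLpNorm' h q μ < ∞ →
      ∫⁻ x, ‖f x‖ₑ * h x ∂μ ≤ C * eLpNorm' h q μ) :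
    eLpNorm' g p μ ≤ C := by
  set I := ∫⁻ x, ‖g x‖ₑ ^ p ∂μ
  have hdual : eLpNorm' (fun x => ‖g x‖ₑ ^ (p - 1)) q μ = I ^ (1 / q) := by
    simp only [eLpNorm', enorm_eq_self, ← ENNReal.rpow_mul, hpq.sub_one_mul_conj, I]
  have hI : I ≤ ∫⁻ x, ‖f x‖ₑ * ‖g x‖ₑ ^ (p - 1) ∂μ := lintegral_mono fun x => calc
    ‖g x‖ₑ ^ p = ‖g x‖ₑ ^ (1 : ℝ) * ‖g x‖ₑ ^ (p - 1) := by
      rw [← ENNReal.rpow_add_of_nonneg _ _ zero_le_one hpq.sub_one_pos.le, add_sub_cancel]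
    _ ≤ ‖f x‖ₑ * ‖g x‖ₑ ^ (p - 1) := by rw [ENNReal.rpow_one]; gcongr; exact hgf x
  have hfin : eLpNorm' (fun x => ‖g x‖ₑ ^ (p - 1)) q μ < ∞ := by
    rw [hdual]; exact ENNReal.rpow_lt_top_of_nonneg hpq.symm.one_div_nonneg hg_fin
  have := hC _ (hg.enorm.pow_const _) hfin
  rw [hdual] at this
  exact ENNReal.rpow_one_div_le_of_le_mul_rpow hpq hg_fin (hI.trans this)

theorem eLpNorm_le_of_lintegral_mul_le [SigmaFinite μ] {p : ℝ≥0∞} {q : ℝ}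
    (hpq : p.toReal.HolderConjugate q) {C : ℝ≥0∞} {f : X → E} (hf : StronglyMeasurable f)
    (hC : ∀ h : X → ℝ≥0∞, Measurable h → eLpNorm' h q μ < ∞ →
      ∫⁻ x, ‖f x‖ₑ * h x ∂μ ≤ C * eLpNorm' h q μ) :
    eLpNorm f p μ ≤ C := by
  have hp1 : 1 < p.toReal := hpq.lt
  have hp0 : p ≠ 0 := by rintro rfl; norm_num at hp1
  have hptop : p ≠ ∞ := by rintro rfl; norm_num at hp1
  set s : ℕ → Set X := fun n => spanningSets μ n ∩ {x | ‖f x‖ ≤ n}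
  have hs : ∀ n, MeasurableSet (s n) := fun n =>
    (measurableSet_spanningSets μ n).inter (measurableSet_le hf.norm.measurable measurable_const)
  refine Lp.eLpNorm_le_of_ae_tendsto (u := atTop) (f := fun n => (s n).indicator f)
    (Eventually.of_forall fun n => ?_) (fun n => (hf.indicator (hs n)).aestronglyMeasurable)
    (ae_of_all _ fun x => ?_)
  · have hfin : ∫⁻ x, ‖(s n).indicator f x‖ₑ ^ p.toReal ∂μ ≠ ∞ := by
      refine ne_top_of_le_ne_top
        (b := ∫⁻ x, (s n).indicator (fun _ => (n : ℝ≥0∞) ^ p.toReal) x ∂μ) ?_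
        (lintegral_mono fun x => ?_)
      · rw [lintegral_indicator_const (hs n)]
        exact ENNReal.mul_ne_top (by finiteness)
          ((measure_mono Set.inter_subset_left).trans_lt (measure_spanningSets_lt_top μ n)).ne
      · by_cases hx : x ∈ s n
        · simp only [Set.indicator_of_mem hx]
          gcongr
          rw [← ofReal_norm, ← ENNReal.ofReal_natCast]
          exact ENNReal.ofReal_le_ofReal hx.2
        · simp [hx, ENNReal.zero_rpow_of_pos (zero_lt_one.trans hp1)]
    rw [eLpNorm_eq_eLpNorm' hp0 hptop]
    exact eLpNorm'_le_of_lintegral_mul_le_of_enorm_le hpq (hf.indicator (hs n))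
      (enorm_indicator_le_enorm_self f) hfin hC
  · refine tendsto_const_nhds.congr' ?_
    filter_upwards [eventually_mem_spanningSets μ x, eventually_ge_atTop ⌈‖f x‖⌉₊] with n hxn hn
    have hfx : ‖f x‖ ≤ n := (Nat.le_ceil ‖f x‖).trans (mod_cast hn)
    exact (Set.indicator_of_mem (show x ∈ s n from ⟨hxn, hfx⟩) f).symm

end Duality

section KernelBounds

variable {X Y E F : Type*} [MeasurableSpace X] [MeasurableSpace Y] {μ : Measure X}
  [NormedAddCommGroup E] [MeasurableSpace E] [OpensMeasurableSpace E] [NormedAddCommGroup F]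

theorem eLpNorm_le_lintegral_mul_eLpNorm_of_ae_enorm_le [SigmaFinite μ] {ν : Measure Y}
    [SFinite ν] {k : X × Y → E} (hk : Measurable k) {g : Y → ℝ≥0∞} (hg : Measurable g) {v : X → F}
    (hv : StronglyMeasurable v)
    (hvk : ∀ᵐ x ∂μ, ‖v x‖ₑ ≤ ∫⁻ y, ‖k (x, y)‖ₑ * g y ∂ν)
    {p : ℝ≥0∞} (hp : 1 < p) :
    eLpNorm v p μ ≤ ∫⁻ y, g y * eLpNorm (fun x => k (x, y)) p μ ∂ν := by
  rcases eq_or_ne p ∞ with rfl | hptop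
  · rw [eLpNorm_exponent_top]
    refine eLpNormEssSup_le_of_ae_enorm_bound ?_
    filter_upwards [hvk, ae_ae_enorm_le_eLpNorm_top (ν := ν) hk] with x hx hkx
    refine hx.trans (lintegral_mono_ae ?_)
    filter_upwards [hkx] with y hy
    rw [mul_comm]
    gcongr
  have hp0 : p ≠ 0 := (zero_lt_one.trans hp).ne'
  have hp1 : 1 < p.toReal := by simpa using ENNReal.toReal_strict_mono hptop hp
  have hpq := Real.HolderConjugate.conjExponent hp1
  refine eLpNorm_le_of_lintegral_mul_le hpq hv fun h hh _ => ?_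
  have hK : Measurable fun z : X × Y => ‖k z‖ₑ := hk.enorm
  have hKx : ∀ x, Measurable fun y => ‖k (x, y)‖ₑ := fun x => hK.comp measurable_prodMk_left
  have hKy : ∀ y, Measurable fun x => ‖k (x, y)‖ₑ := fun y => hK.comp measurable_prodMk_right
  have hHolder : ∀ y, ∫⁻ x, ‖k (x, y)‖ₑ * h x ∂μ ≤
      eLpNorm (fun x => k (x, y)) p μ * eLpNorm' h p.toReal.conjExponent μ := fun y => by
    rw [eLpNorm_eq_eLpNorm' hp0 hptop]
    simpa only [eLpNorm', enorm_eq_self, Pi.mul_apply] using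
      ENNReal.lintegral_mul_le_Lp_mul_Lq μ hpq (hKy y).aemeasurable hh.aemeasurable
  calc ∫⁻ x, ‖v x‖ₑ * h x ∂μ ≤ ∫⁻ x, (∫⁻ y, ‖k (x, y)‖ₑ * g y ∂ν) * h x ∂μ :=
        lintegral_mono_ae (hvk.mono fun x hx => by gcongr)
    _ = ∫⁻ x, ∫⁻ y, g y * (‖k (x, y)‖ₑ * h x) ∂ν ∂μ := lintegral_congr fun x => by
        have hKgx : Measurable fun y => ‖k (x, y)‖ₑ * g y := (hKx x).mul hg
        rw [← lintegral_mul_const _ hKgx]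
        exact lintegral_congr fun y => by ring
    _ = ∫⁻ y, ∫⁻ x, g y * (‖k (x, y)‖ₑ * h x) ∂μ ∂ν :=
        lintegral_lintegral_swap ((hg.comp measurable_snd).mul
          (hK.mul (hh.comp measurable_fst))).aemeasurable
    _ = ∫⁻ y, g y * ∫⁻ x, ‖k (x, y)‖ₑ * h x ∂μ ∂ν := lintegral_congr fun y =>
        lintegral_const_mul _ ((hKy y).mul hh)
    _ ≤ ∫⁻ y, g y * (eLpNorm (fun x => k (x, y)) p μ * eLpNorm' h p.toReal.conjExponent μ) ∂ν :=
        lintegral_mono fun y => mul_le_mul_right (hHolder y) _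
    _ = (∫⁻ y, g y * eLpNorm (fun x => k (x, y)) p μ ∂ν) *
          eLpNorm' h p.toReal.conjExponent μ := by
        simp_rw [← mul_assoc]
        exact lintegral_mul_const'' _ ((hg.mul (hk.eLpNorm_prod_left' p)).aemeasurable)

end KernelBounds

section Symmetric

variable {X E F : Type*} [MeasurableSpace X] {μ : Measure X} [SFinite μ]
  [NormedAddCommGroup E] [MeasurableSpace E] [OpensMeasurableSpace E] [NormedAddCommGroup F]

theorem lintegral_enorm_mul_eLpNorm_le_of_ae_symm {k : X × X → E} (hk : Measurable k)
    (hsym : ∀ᵐ z ∂μ.prod μ, k z = k z.swap) {φ : X → F} (hφ : AEStronglyMeasurable φ μ)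
    (p : ℝ≥0∞) :
    ∫⁻ y, ‖φ y‖ₑ * eLpNorm (fun x => k (x, y)) p μ ∂μ ≤
      eLpNorm φ 2 μ * (∫⁻ x, eLpNorm (fun y => k (x, y)) p μ ^ 2 ∂μ) ^ (1 / 2 : ℝ) := by
  have hswap : ∀ᵐ y ∂μ, eLpNorm (fun x => k (x, y)) p μ = eLpNorm (fun x => k (y, x)) p μ := by
    filter_upwards [Measure.ae_ae_of_ae_prod hsym] with y hy
    exact eLpNorm_congr_ae (hy.mono fun x hx => hx.symm)
  have hsq : ∫⁻ y, eLpNorm (fun x => k (x, y)) p μ ^ (2 : ℝ) ∂μ =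
      ∫⁻ x, eLpNorm (fun y => k (x, y)) p μ ^ 2 ∂μ := by
    refine lintegral_congr_ae (hswap.mono fun y hy => ?_)
    dsimp only
    rw [hy, ENNReal.rpow_two]
  rw [eLpNorm_eq_lintegral_rpow_enorm_toReal two_ne_zero ENNReal.ofNat_ne_top, ← hsq]
  simpa using ENNReal.lintegral_mul_le_Lp_mul_Lq μ Real.HolderConjugate.two_two hφ.enorm
    (hk.eLpNorm_prod_left' p).aemeasurable

end Symmetric

/-- **Theorem 2.10(1), upper bound.** If `T` is an integral operator on `L²(μ)` with a symmetric
measurable kernel `k`, `p ∈ (1, ∞]`, and `c_p := (∫ ‖k(x,·)‖_{L^p}² dμ(x))^{1/2} < ∞`, then any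
`L²`-normalized eigenfunction `φ` with `T φ = r φ`, `r > 0`, belongs to `L^p(μ)` and satisfies
`‖φ‖_{L^p} ≤ c_p / r`. -/
theorem stmt5 {X : Type*} [MeasurableSpace X] (μ : Measure X) [SigmaFinite μ]
    (T : Lp ℝ 2 μ →L[ℝ] Lp ℝ 2 μ)
    (k : X × X → ℝ) (hk : Measurable k)
    (hsym : ∀ᵐ z ∂(μ.prod μ), k z = k z.swap)
    (hker : ∀ f : Lp ℝ 2 μ, ∀ᵐ x ∂μ, (T f : X → ℝ) x = ∫ y, k (x, y) * f y ∂μ)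
    (p : ℝ≥0∞) (hp : 1 < p)
    (hcfin : (∫⁻ x, (eLpNorm (fun y => k (x, y)) p μ) ^ 2 ∂μ) ≠ ∞)
    (φ : Lp ℝ 2 μ) (hφ : ‖φ‖ = 1) (r : ℝ) (hr : 0 < r) (hTφ : T φ = r • φ) :
    MemLp (φ : X → ℝ) p μ ∧
      (eLpNorm (φ : X → ℝ) p μ).toReal ≤
        ((∫⁻ x, (eLpNorm (fun y => k (x, y)) p μ) ^ 2 ∂μ) ^ (1/2 : ℝ)).toReal / r := by
  set c := (∫⁻ x, (eLpNorm (fun y => k (x, y)) p μ) ^ 2 ∂μ) ^ (1/2 : ℝ)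
  have hkernel : ∀ᵐ x ∂μ, ‖(T φ : X → ℝ) x‖ₑ ≤ ∫⁻ y, ‖k (x, y)‖ₑ * ‖(φ : X → ℝ) y‖ₑ ∂μ := by
    filter_upwards [hker φ] with x hx
    simpa only [hx, enorm_mul] using
      enorm_integral_le_lintegral_enorm (fun y => k (x, y) * (φ : X → ℝ) y)
  have hφ2 : eLpNorm (φ : X → ℝ) 2 μ = 1 := by
    rw [← ENNReal.ofReal_toReal (Lp.eLpNorm_ne_top φ), ← Lp.norm_def, hφ, ENNReal.ofReal_one]
  have hbound : ENNReal.ofReal r * eLpNorm (φ : X → ℝ) p μ ≤ c := calc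
    ENNReal.ofReal r * eLpNorm (φ : X → ℝ) p μ = eLpNorm (T φ : X → ℝ) p μ := by
      rw [hTφ, eLpNorm_congr_ae (Lp.coeFn_smul r φ), eLpNorm_const_smul,
        Real.enorm_eq_ofReal hr.le]
    _ ≤ ∫⁻ y, ‖(φ : X → ℝ) y‖ₑ * eLpNorm (fun x => k (x, y)) p μ ∂μ :=
      eLpNorm_le_lintegral_mul_eLpNorm_of_ae_enorm_le hk (Lp.stronglyMeasurable φ).enorm
        (Lp.stronglyMeasurable _) hkernel hp
    _ ≤ c := by
      simpa only [hφ2, one_mul] using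
        lintegral_enorm_mul_eLpNorm_le_of_ae_symm hk hsym (Lp.aestronglyMeasurable φ) p
  have hr' : ENNReal.ofReal r ≠ 0 := ENNReal.ofReal_pos.mpr hr |>.ne'
  have hle : eLpNorm (φ : X → ℝ) p μ ≤ c / ENNReal.ofReal r := by
    rwa [ENNReal.le_div_iff_mul_le (.inl hr') (.inl ENNReal.ofReal_ne_top), mul_comm]
  have hc : c / ENNReal.ofReal r ≠ ∞ :=
    ENNReal.div_ne_top (ENNReal.rpow_ne_top_of_nonneg (by norm_num) hcfin) hr'
  refine ⟨⟨Lp.aestronglyMeasurable φ, hle.trans_lt hc.lt_top⟩, ?_⟩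
  simpa [ENNReal.toReal_div, ENNReal.toReal_ofReal hr.le] using ENNReal.toReal_mono hc hle
end

section
/- Let (X, 𝒜, μ) be a measure space with μ(X) < ∞ and let T be a continuous linear operator on the real Hilbert space L²(μ) which is an integral operator with measurable kernel k : X × X → ℝ satisfying k(x,y) = k(y,x) and |k(x,y)| ≤ M for (μ⊗μ)-a.e. (x,y), where M ≥ 0. If φ ∈ L²(μ), ‖φ‖_{L²(μ)} = 1, r > 0 and T φ = r φ, then for every p ∈ [1, ∞]: ‖φ‖_{L^p(μ)} ≤ μ(X)^{1/p + 1/2} · M / r. -/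
/-!
The eigenvalue equation gives `r φ(x) = ∫ k(x, y) φ(y) dμ(y)` for a.e. `x`, so by the kernel bound
and Cauchy–Schwarz `r |φ(x)| ≤ M ‖φ‖₁ ≤ M μ(X)^{1/2} ‖φ‖₂`. Thus `φ` is essentially bounded by
`M μ(X)^{1/2} / r`, and on a finite measure space this bound costs a factor `μ(X)^{1/p}` in `L^p`.
-/

open MeasureTheory
open scoped ENNReal

namespace MeasureTheory

variable {X : Type*} [MeasurableSpace X] {μ : Measure X} [IsFiniteMeasure μ]

theorem integral_abs_le_norm_mul_measure_univ_rpow (f : Lp ℝ 2 μ) :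
    ∫ x, |f x| ∂μ ≤ ‖f‖ * (μ Set.univ).toReal ^ (1 / 2 : ℝ) := by
  have hf : MemLp (f : X → ℝ) 2 μ := Lp.memLp f
  have hL1_le : eLpNorm (f : X → ℝ) 1 μ ≤ eLpNorm (f : X → ℝ) 2 μ * μ Set.univ ^ (1 / 2 : ℝ) := by
    convert eLpNorm_le_eLpNorm_mul_rpow_measure_univ (μ := μ) (p := 1) (q := 2)
      one_le_two hf.aestronglyMeasurable using 3
    norm_num
  have hfin : eLpNorm (f : X → ℝ) 2 μ * μ Set.univ ^ (1 / 2 : ℝ) ≠ ∞ :=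
    ENNReal.mul_ne_top hf.eLpNorm_ne_top
      (ENNReal.rpow_ne_top_of_nonneg (by norm_num) (measure_ne_top μ _))
  have hint : Integrable (f : X → ℝ) μ := memLp_one_iff_integrable.mp (hf.mono_exponent one_le_two)
  calc ∫ x, |f x| ∂μ = (eLpNorm (f : X → ℝ) 1 μ).toReal := by
        simp only [← Real.norm_eq_abs, eLpNorm_one_eq_lintegral_enorm,
          ← ofReal_integral_norm_eq_lintegral_enorm hint,
          ENNReal.toReal_ofReal (integral_nonneg fun _ => norm_nonneg _)]
    _ ≤ ‖f‖ * (μ Set.univ).toReal ^ (1 / 2 : ℝ) := by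
        rw [Lp.norm_def, ENNReal.toReal_rpow, ← ENNReal.toReal_mul]
        exact ENNReal.toReal_mono hfin hL1_le

theorem abs_integral_mul_le_of_ae_abs_le {g : X → ℝ} {M : ℝ} (hM : 0 ≤ M)
    (hg : ∀ᵐ y ∂μ, |g y| ≤ M) (f : Lp ℝ 2 μ) :
    |∫ y, g y * f y ∂μ| ≤ M * ‖f‖ * (μ Set.univ).toReal ^ (1 / 2 : ℝ) := by
  have hint : Integrable (f : X → ℝ) μ :=
    memLp_one_iff_integrable.mp ((Lp.memLp f).mono_exponent one_le_two)
  calc |∫ y, g y * f y ∂μ| ≤ ∫ y, M * |f y| ∂μ := by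
        refine norm_integral_le_of_norm_le (f := fun y => g y * f y) (hint.abs.const_mul M) ?_
        filter_upwards [hg] with y hy
        rw [Real.norm_eq_abs, abs_mul]
        exact mul_le_mul_of_nonneg_right hy (abs_nonneg _)
    _ = M * ∫ y, |f y| ∂μ := integral_const_mul M _
    _ ≤ M * ‖f‖ * (μ Set.univ).toReal ^ (1 / 2 : ℝ) := by
        rw [mul_assoc]
        exact mul_le_mul_of_nonneg_left (integral_abs_le_norm_mul_measure_univ_rpow f) hM

theorem ae_abs_le_of_integral_operator_eigen (T : Lp ℝ 2 μ →L[ℝ] Lp ℝ 2 μ) {k : X × X → ℝ}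
    {M : ℝ} (hM : 0 ≤ M) (hbd : ∀ᵐ z ∂(μ.prod μ), |k z| ≤ M)
    (hker : ∀ f : Lp ℝ 2 μ, ∀ᵐ x ∂μ, (T f : X → ℝ) x = ∫ y, k (x, y) * f y ∂μ)
    {φ : Lp ℝ 2 μ} {r : ℝ} (hr : 0 < r) (hTφ : T φ = r • φ) :
    ∀ᵐ x ∂μ, |φ x| ≤ M * ‖φ‖ * (μ Set.univ).toReal ^ (1 / 2 : ℝ) / r := by
  have heig : ∀ᵐ x ∂μ, r * φ x = ∫ y, k (x, y) * φ y ∂μ := by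
    filter_upwards [hker φ, hTφ ▸ Lp.coeFn_smul r φ] with x hker_x hsmul_x
    rw [← hker_x, hsmul_x, Pi.smul_apply, smul_eq_mul]
  filter_upwards [heig, Measure.ae_ae_of_ae_prod hbd] with x heig_x hbd_x
  rw [le_div_iff₀ hr, mul_comm, ← abs_of_pos hr, ← abs_mul, heig_x]
  exact abs_integral_mul_le_of_ae_abs_le hM hbd_x φ

theorem toReal_eLpNorm_le_of_ae_abs_le {f : X → ℝ} {C : ℝ} (hC : 0 ≤ C)
    (hf : ∀ᵐ x ∂μ, |f x| ≤ C) (p : ℝ≥0∞) :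
    (eLpNorm f p μ).toReal ≤ (μ Set.univ).toReal ^ (1 / p.toReal) * C := by
  have hfin : μ Set.univ ^ p.toReal⁻¹ * ENNReal.ofReal C ≠ ∞ :=
    ENNReal.mul_ne_top (ENNReal.rpow_ne_top_of_nonneg (by positivity) (measure_ne_top μ _))
      ENNReal.ofReal_ne_top
  have h := ENNReal.toReal_mono hfin (eLpNorm_le_of_ae_bound (p := p) (f := f) hf)
  rwa [ENNReal.toReal_mul, ← ENNReal.toReal_rpow, ENNReal.toReal_ofReal hC, ← one_div] at h

end MeasureTheory

theorem stmt7_general {X : Type*} [MeasurableSpace X] (μ : Measure X) [IsFiniteMeasure μ]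
    (T : Lp ℝ 2 μ →L[ℝ] Lp ℝ 2 μ)
    (k : X × X → ℝ)
    (M : ℝ) (hM : 0 ≤ M)
    (hbd : ∀ᵐ z ∂(μ.prod μ), |k z| ≤ M)
    (hker : ∀ f : Lp ℝ 2 μ, ∀ᵐ x ∂μ, (T f : X → ℝ) x = ∫ y, k (x, y) * f y ∂μ)
    (φ : Lp ℝ 2 μ) (hφ : ‖φ‖ = 1) (r : ℝ) (hr : 0 < r) (hTφ : T φ = r • φ) :
    ∀ p : ℝ≥0∞, 1 ≤ p →
      (eLpNorm (φ : X → ℝ) p μ).toReal ≤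
        (μ Set.univ).toReal ^ (1 / p.toReal + 1/2) * M / r := by
  intro p _
  have hφ_bound := ae_abs_le_of_integral_operator_eigen T hM hbd hker hr hTφ
  rw [hφ, mul_one] at hφ_bound
  calc (eLpNorm (φ : X → ℝ) p μ).toReal
      ≤ (μ Set.univ).toReal ^ (1 / p.toReal) * (M * (μ Set.univ).toReal ^ (1 / 2 : ℝ) / r) :=
        toReal_eLpNorm_le_of_ae_abs_le (by positivity) hφ_bound p
    _ = (μ Set.univ).toReal ^ (1 / p.toReal + 1/2) * M / r := by
        rw [Real.rpow_add' ENNReal.toReal_nonneg (by positivity)]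
        ring

/-- **Theorem 2.10(2).** On a finite measure space, if `T` is an integral operator on `L²(μ)`
with a symmetric measurable kernel bounded a.e. by `M`, then any `L²`-normalized eigenfunction
`φ` with `T φ = r φ`, `r > 0`, satisfies `‖φ‖_{L^p} ≤ μ(X)^{1/p + 1/2} · M / r` for every
`p ∈ [1, ∞]`. -/
theorem stmt7 {X : Type*} [MeasurableSpace X] (μ : Measure X) [IsFiniteMeasure μ]
    (T : Lp ℝ 2 μ →L[ℝ] Lp ℝ 2 μ)
    (k : X × X → ℝ) (hk : Measurable k)
    (M : ℝ) (hM : 0 ≤ M)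
    (hsym : ∀ᵐ z ∂(μ.prod μ), k z = k z.swap)
    (hbd : ∀ᵐ z ∂(μ.prod μ), |k z| ≤ M)
    (hker : ∀ f : Lp ℝ 2 μ, ∀ᵐ x ∂μ, (T f : X → ℝ) x = ∫ y, k (x, y) * f y ∂μ)
    (φ : Lp ℝ 2 μ) (hφ : ‖φ‖ = 1) (r : ℝ) (hr : 0 < r) (hTφ : T φ = r • φ) :
    ∀ p : ℝ≥0∞, 1 ≤ p →
      (eLpNorm (φ : X → ℝ) p μ).toReal ≤
        (μ Set.univ).toReal ^ (1 / p.toReal + 1/2) * M / r :=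
  stmt7_general μ T k M hM hbd hker φ hφ r hr hTφ
end

section
/- Let ν, μ, c₁, c₃ > 0 be real numbers and let 0 < a < b. Then there exists t₀ > 0 such that for all real s, t with 0 < s ≤ t < t₀: c₁ · t^{−ν} · exp(−a / t^{μ}) > c₃ · s^{−ν} · exp(−b / s^{μ}). -/
/-!
Substituting `x = u^{-μ}` turns `u^{-ν} exp(k / u^μ)` into `x^{ν/μ} exp(k x)`, so as `u → 0⁺` it
tends to `0` for `k < 0` and to `∞` for `k > 0`, whatever `ν`. Split the gap `b - a` as
`b = a' + ε`, `a = a' - ε` with `a' = (a+b)/2 > 0`. For small `s ≤ t` the polynomial factors are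
absorbed: `c₃ s^{-ν} exp(-ε/s^μ) < c₁ < c₁ t^{-ν} exp(ε/t^μ)`, and the common factor
`exp(-a'/u^μ)` is increasing in `u`.
-/

open Real Filter Topology Set

theorem rpow_neg_mul_exp_div_rpow {μ u : ℝ} (hμ : μ ≠ 0) (hu : 0 < u) (ν k : ℝ) :
    u ^ (-ν) * exp (k / u ^ μ) = (u ^ (-μ)) ^ (ν / μ) * exp (k * u ^ (-μ)) := by
  rw [← rpow_mul hu.le, rpow_neg hu.le μ, div_eq_mul_inv k]
  congr 2
  field_simp

theorem tendsto_rpow_neg_mul_exp_neg_div_rpow_nhdsGT_zero (ν : ℝ) {μ ε : ℝ} (hμ : 0 < μ)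
    (hε : 0 < ε) :
    Tendsto (fun u : ℝ => u ^ (-ν) * exp (-ε / u ^ μ)) (𝓝[>] 0) (𝓝 0) := by
  refine ((tendsto_rpow_mul_exp_neg_mul_atTop_nhds_zero (ν / μ) ε hε).comp
    (tendsto_rpow_neg_nhdsGT_zero (neg_neg_of_pos hμ))).congr' ?_
  filter_upwards [self_mem_nhdsWithin] with u hu
  exact (rpow_neg_mul_exp_div_rpow hμ.ne' hu ν (-ε)).symm

theorem tendsto_rpow_neg_mul_exp_div_rpow_nhdsGT_zero (ν : ℝ) {μ ε : ℝ} (hμ : 0 < μ)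
    (hε : 0 < ε) :
    Tendsto (fun u : ℝ => u ^ (-ν) * exp (ε / u ^ μ)) (𝓝[>] 0) atTop := by
  refine ((tendsto_exp_mul_div_rpow_atTop (-(ν / μ)) ε hε).comp
    (tendsto_rpow_neg_nhdsGT_zero (neg_neg_of_pos hμ))).congr' ?_
  filter_upwards [self_mem_nhdsWithin] with u hu
  rw [rpow_neg_mul_exp_div_rpow hμ.ne' hu ν ε, Function.comp_apply,
    rpow_neg (rpow_pos_of_pos hu _).le, div_inv_eq_mul, mul_comm]

theorem exp_neg_div_rpow_le {μ c s t : ℝ} (hμ : 0 ≤ μ) (hc : 0 ≤ c) (hs : 0 < s) (hst : s ≤ t) :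
    exp (-c / s ^ μ) ≤ exp (-c / t ^ μ) := by
  rw [neg_div, neg_div]
  gcongr

theorem stmt9_general (ν μ c₁ c₃ a b : ℝ) (hμ : 0 < μ) (hc₁ : 0 < c₁)
    (ha : 0 < a) (hab : a < b) :
    ∃ t₀ : ℝ, 0 < t₀ ∧ ∀ s t : ℝ, 0 < s → s ≤ t → t < t₀ →
      c₃ * s ^ (-ν) * Real.exp (-b / s ^ μ) < c₁ * t ^ (-ν) * Real.exp (-a / t ^ μ) := by
  set ε := (b - a) / 2
  set a' := (a + b) / 2
  have hε : 0 < ε := by simp only [ε]; linarith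
  have ha' : 0 < a' := by simp only [a']; linarith
  have hsmall : ∀ᶠ u in 𝓝[>] 0, c₃ * (u ^ (-ν) * exp (-ε / u ^ μ)) < c₁ :=
    ((tendsto_rpow_neg_mul_exp_neg_div_rpow_nhdsGT_zero ν hμ hε).const_mul c₃).eventually_lt_const
      (by simpa using hc₁)
  have hlarge : ∀ᶠ u in 𝓝[>] 0, 1 < u ^ (-ν) * exp (ε / u ^ μ) :=
    (tendsto_rpow_neg_mul_exp_div_rpow_nhdsGT_zero ν hμ hε).eventually_gt_atTop 1
  obtain ⟨t₀, ht₀, hsub⟩ := mem_nhdsGT_iff_exists_Ioo_subset.1 (hsmall.and hlarge)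
  refine ⟨t₀, ht₀, fun s t hs hst ht => ?_⟩
  obtain ⟨hs_small, -⟩ := hsub ⟨hs, hst.trans_lt ht⟩
  obtain ⟨-, ht_large⟩ := hsub ⟨hs.trans_le hst, ht⟩
  calc c₃ * s ^ (-ν) * exp (-b / s ^ μ)
      = c₃ * (s ^ (-ν) * exp (-ε / s ^ μ)) * exp (-a' / s ^ μ) := by
        rw [show -b = -ε + -a' by ring, add_div, exp_add]; ring
    _ < c₁ * exp (-a' / s ^ μ) := mul_lt_mul_of_pos_right hs_small (exp_pos _)
    _ ≤ c₁ * exp (-a' / t ^ μ) :=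
        mul_le_mul_of_nonneg_left (exp_neg_div_rpow_le hμ.le ha'.le hs hst) hc₁.le
    _ < c₁ * (t ^ (-ν) * exp (ε / t ^ μ)) * exp (-a' / t ^ μ) := by
        gcongr; exact lt_mul_of_one_lt_right hc₁ ht_large
    _ = c₁ * t ^ (-ν) * exp (-a / t ^ μ) := by
        rw [show -a = ε + -a' by ring, add_div, exp_add]; ring

/-- **Key comparison inequality in Theorem 3.2(2) (local Dirichlet forms).**
For `ν, μ, c₁, c₃ > 0` and `0 < a < b` there is `t₀ > 0` such that for all
`0 < s ≤ t < t₀` one has `c₁ t^{-ν} exp(-a/t^μ) > c₃ s^{-ν} exp(-b/s^μ)`. -/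
theorem stmt9 (ν μ c₁ c₃ a b : ℝ) (hν : 0 < ν) (hμ : 0 < μ) (hc₁ : 0 < c₁) (hc₃ : 0 < c₃)
    (ha : 0 < a) (hab : a < b) :
    ∃ t₀ : ℝ, 0 < t₀ ∧ ∀ s t : ℝ, 0 < s → s ≤ t → t < t₀ →
      c₃ * s ^ (-ν) * Real.exp (-b / s ^ μ) < c₁ * t ^ (-ν) * Real.exp (-a / t ^ μ) :=
  stmt9_general ν μ c₁ c₃ a b hμ hc₁ ha hab
end

section
/- Let ν, a, b, d, κ, c₁ > 0 be real numbers with b < d. Then there exists t₀ > 0 such that for all real s, t with 0 < s ≤ t < t₀: c₁ · t^{−ν/2} · exp(−a t − b/t) > κ · s^{−ν/2} · exp(κ s − d/s). -/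
/-!
For `s ≤ t ≤ 1` the right-hand side is at least `c₁ e^{-a} e^{-b/s}` and the left-hand side at
most `κ e^κ s^{-ν/2} e^{-d/s}`, so it suffices that `s^{-ν/2} e^{-(d-b)/s} → 0` as `s → 0⁺`:
exponential decay in `1/s` beats polynomial growth.
-/

open Real Filter Topology Set

lemma tendsto_rpow_neg_mul_exp_neg_div_nhdsGT_zero (p : ℝ) {ε : ℝ} (hε : 0 < ε) :
    Tendsto (fun s : ℝ => s ^ (-p) * exp (-ε / s)) (𝓝[>] 0) (𝓝 0) := by
  refine ((tendsto_rpow_mul_exp_neg_mul_atTop_nhds_zero p ε hε).comp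
    tendsto_inv_nhdsGT_zero).congr' ?_
  filter_upwards [self_mem_nhdsWithin] with s (hs : 0 < s)
  simp only [Function.comp_apply, inv_rpow hs.le, ← rpow_neg hs.le, div_eq_mul_inv]

lemma mul_rpow_neg_mul_exp_sub_div_le {κ p d s : ℝ} (hκ : 0 ≤ κ) (hs : 0 < s) (hs₁ : s ≤ 1) :
    κ * s ^ (-p) * exp (κ * s - d / s) ≤ κ * exp κ * (s ^ (-p) * exp (-d / s)) := by
  have : exp (κ * s - d / s) ≤ exp κ * exp (-d / s) := by
    rw [← exp_add, neg_div, ← sub_eq_add_neg]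
    gcongr
    nlinarith
  calc κ * s ^ (-p) * exp (κ * s - d / s) ≤ κ * s ^ (-p) * (exp κ * exp (-d / s)) := by gcongr
    _ = _ := by ring

lemma mul_exp_neg_sub_div_le_mul_rpow_neg_mul_exp {c a b p s t : ℝ} (hc : 0 ≤ c) (ha : 0 ≤ a)
    (hb : 0 ≤ b) (hp : 0 ≤ p) (hs : 0 < s) (hst : s ≤ t) (ht₁ : t ≤ 1) :
    c * exp (-a - b / s) ≤ c * t ^ (-p) * exp (-a * t - b / t) := by
  have ht : 0 < t := hs.trans_le hst
  have h_one_le : 1 ≤ t ^ (-p) := one_le_rpow_of_pos_of_le_one_of_nonpos ht ht₁ (by linarith)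
  have h_exp : exp (-a - b / s) ≤ exp (-a * t - b / t) := by
    gcongr
    nlinarith
  calc c * exp (-a - b / s) ≤ c * 1 * exp (-a * t - b / t) := by rw [mul_one]; gcongr
    _ ≤ c * t ^ (-p) * exp (-a * t - b / t) := by gcongr

theorem stmt11_general (ν a b d κ c₁ : ℝ) (hν : 0 < ν) (ha : 0 < a) (hb : 0 < b)
    (hκ : 0 < κ) (hc₁ : 0 < c₁) (hbd : b < d) :
    ∃ t₀ : ℝ, 0 < t₀ ∧ ∀ s t : ℝ, 0 < s → s ≤ t → t < t₀ →
      κ * s ^ (-(ν / 2)) * Real.exp (κ * s - d / s) <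
        c₁ * t ^ (-(ν / 2)) * Real.exp (-a * t - b / t) := by
  set p := ν / 2
  have h_small : ∀ᶠ s in 𝓝[>] 0, s < 1 ∧
      κ * exp κ * (s ^ (-p) * exp (-(d - b) / s)) < c₁ * exp (-a) := by
    refine Eventually.and ?_ ?_
    · exact mem_of_superset (Ioo_mem_nhdsGT one_pos) fun s hs => hs.2
    · refine ((tendsto_rpow_neg_mul_exp_neg_div_nhdsGT_zero p (sub_pos.2 hbd)).const_mul
        (κ * exp κ)).eventually_lt_const ?_
      rw [mul_zero]; positivity
  obtain ⟨t₀, ht₀, h_t₀⟩ := mem_nhdsGT_iff_exists_Ioo_subset.1 h_small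
  refine ⟨t₀, ht₀, fun s t hs hst ht => ?_⟩
  obtain ⟨hs₁, h_s⟩ := h_t₀ ⟨hs, hst.trans_lt ht⟩
  obtain ⟨ht₁, -⟩ := h_t₀ ⟨hs.trans_le hst, ht⟩
  calc κ * s ^ (-p) * exp (κ * s - d / s)
      ≤ κ * exp κ * (s ^ (-p) * exp (-d / s)) := mul_rpow_neg_mul_exp_sub_div_le hκ.le hs hs₁.le
    _ = κ * exp κ * (s ^ (-p) * exp (-(d - b) / s)) * exp (-b / s) := by
      rw [mul_assoc (κ * exp κ), mul_assoc (s ^ (-p)), ← exp_add]; ring_nf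
    _ < c₁ * exp (-a) * exp (-b / s) := by gcongr
    _ = c₁ * exp (-a - b / s) := by rw [mul_assoc, ← exp_add]; ring_nf
    _ ≤ c₁ * t ^ (-p) * exp (-a * t - b / t) :=
      mul_exp_neg_sub_div_le_mul_rpow_neg_mul_exp hc₁.le ha.le hb.le (by positivity) hs hst ht₁.le

/-- **Key comparison inequality in Theorem 3.8(2) (sub-Riemannian Dirichlet forms on Lie
groups).** For `ν, a, b, d, κ, c₁ > 0` with `b < d` there exists `t₀ > 0` such that for all
`0 < s ≤ t < t₀` one has `c₁ t^{-ν/2} exp(-a t - b/t) > κ s^{-ν/2} exp(κ s - d/s)`. -/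
theorem stmt11 (ν a b d κ c₁ : ℝ) (hν : 0 < ν) (ha : 0 < a) (hb : 0 < b) (hd : 0 < d)
    (hκ : 0 < κ) (hc₁ : 0 < c₁) (hbd : b < d) :
    ∃ t₀ : ℝ, 0 < t₀ ∧ ∀ s t : ℝ, 0 < s → s ≤ t → t < t₀ →
      κ * s ^ (-(ν / 2)) * Real.exp (κ * s - d / s) <
        c₁ * t ^ (-(ν / 2)) * Real.exp (-a * t - b / t) :=
  stmt11_general ν a b d κ c₁ hν ha hb hκ hc₁ hbd
end

section
/- Let (U, 𝒜, μ) be a measure space with μ(U) < ∞, let ν, κ > 0, and for each t > 0 let P_t be a continuous linear operator on the real Hilbert space L²(μ) which is an integral operator with measurable kernel k_t : U × U → ℝ satisfying k_t(x,y) = k_t(y,x) and |k_t(x,y)| ≤ κ · t^{−ν/2} · e^{κ t} for (μ⊗μ)-a.e. (x,y). Let φ ∈ L²(μ) with ‖φ‖_{L²(μ)} = 1 and let λ ∈ ℝ with λ + κ > 0 be such that P_t φ = e^{−λ t} φ for every t > 0. Then for every p ∈ [1, ∞]: ‖φ‖_{L^p(μ)} ≤ μ(U)^{1/p + 1/2}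 · κ · (2e/ν)^{ν/2} · (λ + κ)^{ν/2}. -/
/-! At the time `t = ν / (2(λ + κ))` the eigenvalue equation writes `φ` as `e^{λt}` times the
integral of the kernel against `φ`, so `|φ| ≤ e^{λt} κ t^{-ν/2} e^{κt} ‖φ‖_{L¹}` a.e.; this choice
of `t` minimizes the constant, and `‖φ‖_{L¹} ≤ μ(U)^{1/2} ‖φ‖_{L²}` by Hölder. An a.e. bound `C`
on a finite measure space gives `‖φ‖_{L^p} ≤ μ(U)^{1/p} C`. -/

open MeasureTheory
open scoped ENNReal

theorem rpow_neg_mul_exp_at_argmin {a ν : ℝ} (ha : 0 < a) (hν : 0 < ν) :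
    (ν / (2 * a)) ^ (-(ν / 2)) * Real.exp (a * (ν / (2 * a))) =
      (2 * Real.exp 1 / ν) ^ (ν / 2) * a ^ (ν / 2) := by
  have hexp : Real.exp (a * (ν / (2 * a))) = Real.exp 1 ^ (ν / 2) := by
    rw [Real.exp_one_rpow]; congr 1; field_simp
  rw [hexp, Real.rpow_neg (by positivity), ← Real.inv_rpow (by positivity), inv_div,
    ← Real.mul_rpow (by positivity) (Real.exp_pos 1).le, ← Real.mul_rpow (by positivity) ha.le]
  congr 1
  field_simp

namespace MeasureTheory

variable {α E : Type*} [MeasurableSpace α] {μ : Measure α} [NormedAddCommGroup E]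

theorem integral_norm_le_measure_univ_rpow_mul_norm [IsFiniteMeasure μ] {p : ℝ≥0∞} (hp : 1 ≤ p)
    (f : Lp E p μ) : ∫ x, ‖f x‖ ∂μ ≤ (μ Set.univ).toReal ^ (1 - p.toReal⁻¹) * ‖f‖ := by
  have holder : eLpNorm f 1 μ ≤ eLpNorm f p μ * μ Set.univ ^ (1 - p.toReal⁻¹) := by
    simpa using eLpNorm_le_eLpNorm_mul_rpow_measure_univ hp (Lp.aestronglyMeasurable f)
  have hexp : 0 ≤ 1 - p.toReal⁻¹ := by
    rcases eq_or_ne p ∞ with rfl | hp_top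
    · simp
    · have : 1 ≤ p.toReal := by simpa using ENNReal.toReal_mono hp_top hp
      exact sub_nonneg.2 (inv_le_one_of_one_le₀ this)
  have hfin : eLpNorm f p μ * μ Set.univ ^ (1 - p.toReal⁻¹) ≠ ∞ :=
    ENNReal.mul_ne_top (Lp.eLpNorm_ne_top f)
      (ENNReal.rpow_ne_top_of_nonneg hexp (measure_ne_top μ _))
  rw [integral_norm_eq_lintegral_enorm (Lp.aestronglyMeasurable f),
    ← eLpNorm_one_eq_lintegral_enorm]
  calc (eLpNorm f 1 μ).toReal
      ≤ (eLpNorm f p μ * μ Set.univ ^ (1 - p.toReal⁻¹)).toReal := ENNReal.toReal_mono hfin holder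
    _ = (μ Set.univ).toReal ^ (1 - p.toReal⁻¹) * ‖f‖ := by
        rw [ENNReal.toReal_mul, ENNReal.toReal_rpow, Lp.norm_def, mul_comm]

theorem toReal_eLpNorm_le_of_ae_bound [IsFiniteMeasure μ] {p : ℝ≥0∞} {f : α → E} {C : ℝ}
    (hC : 0 ≤ C) (hf : ∀ᵐ x ∂μ, ‖f x‖ ≤ C) :
    (eLpNorm f p μ).toReal ≤ (μ Set.univ).toReal ^ p.toReal⁻¹ * C := by
  have hfin : μ Set.univ ^ p.toReal⁻¹ * ENNReal.ofReal C ≠ ∞ :=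
    ENNReal.mul_ne_top (ENNReal.rpow_ne_top_of_nonneg (by positivity) (measure_ne_top μ _))
      ENNReal.ofReal_ne_top
  calc (eLpNorm f p μ).toReal
      ≤ (μ Set.univ ^ p.toReal⁻¹ * ENNReal.ofReal C).toReal :=
        ENNReal.toReal_mono hfin (eLpNorm_le_of_ae_bound hf)
    _ = (μ Set.univ).toReal ^ p.toReal⁻¹ * C := by
        rw [ENNReal.toReal_mul, ENNReal.toReal_rpow, ENNReal.toReal_ofReal hC]

theorem abs_integral_mul_le_of_ae_abs_le_s13 {f g : α → ℝ} {M : ℝ} (hg : Integrable g μ)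
    (hf : ∀ᵐ y ∂μ, |f y| ≤ M) : |∫ y, f y * g y ∂μ| ≤ M * ∫ y, |g y| ∂μ := by
  calc |∫ y, f y * g y ∂μ|
      ≤ ∫ y, |f y| * |g y| ∂μ := by
        simpa only [Real.norm_eq_abs, abs_mul] using
          norm_integral_le_integral_norm (μ := μ) fun y => f y * g y
    _ ≤ ∫ y, M * |g y| ∂μ := by
        refine integral_mono_of_nonneg (.of_forall fun y => by positivity) (hg.abs.const_mul M) ?_
        filter_upwards [hf] with y hy
        exact mul_le_mul_of_nonneg_right hy (abs_nonneg _)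
    _ = M * ∫ y, |g y| ∂μ := integral_const_mul M _

theorem ae_abs_le_of_mul_eq_integral_kernel [SFinite μ] {K : α × α → ℝ} {φ : α → ℝ} {c M : ℝ}
    (hc : c ≠ 0) (hφ : Integrable φ μ) (hK : ∀ᵐ z ∂μ.prod μ, |K z| ≤ M)
    (heig : ∀ᵐ x ∂μ, c * φ x = ∫ y, K (x, y) * φ y ∂μ) :
    ∀ᵐ x ∂μ, |φ x| ≤ |c|⁻¹ * (M * ∫ y, |φ y| ∂μ) := by
  filter_upwards [heig, Measure.ae_ae_of_ae_prod hK] with x hx hKx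
  rw [le_inv_mul_iff₀ (abs_pos.2 hc), ← abs_mul, hx]
  exact abs_integral_mul_le_of_ae_abs_le_s13 hφ hKx

end MeasureTheory

theorem stmt13_general {U : Type*} [MeasurableSpace U] (μ : Measure U) [IsFiniteMeasure μ]
    (ν κ : ℝ) (hν : 0 < ν) (hκ : 0 < κ)
    (P : ℝ → (Lp ℝ 2 μ →L[ℝ] Lp ℝ 2 μ)) (k : ℝ → U × U → ℝ)
    (hbd : ∀ t : ℝ, 0 < t →
      ∀ᵐ z ∂(μ.prod μ), |k t z| ≤ κ * t ^ (-(ν / 2)) * Real.exp (κ * t))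
    (hker : ∀ t : ℝ, 0 < t →
      ∀ f : Lp ℝ 2 μ, ∀ᵐ x ∂μ, (P t f : U → ℝ) x = ∫ y, k t (x, y) * f y ∂μ)
    (φ : Lp ℝ 2 μ) (hφ : ‖φ‖ = 1) (lam : ℝ) (hlam : 0 < lam + κ)
    (heig : ∀ t : ℝ, 0 < t → P t φ = Real.exp (-lam * t) • φ) :
    ∀ p : ℝ≥0∞, 1 ≤ p →
      (eLpNorm (φ : U → ℝ) p μ).toReal ≤
        (μ Set.univ).toReal ^ (1 / p.toReal + 1/2) * κ *
          (2 * Real.exp 1 / ν) ^ (ν / 2) * (lam + κ) ^ (ν / 2) := by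
  intro p hp
  set t := ν / (2 * (lam + κ))
  have ht : 0 < t := by positivity
  have hL1 : ∫ y, |(φ : U → ℝ) y| ∂μ ≤ (μ Set.univ).toReal ^ (1 / 2 : ℝ) := by
    simpa [hφ, show (1 : ℝ) - 2⁻¹ = 1 / 2 by norm_num] using
      integral_norm_le_measure_univ_rpow_mul_norm one_le_two φ
  have hpointwise := ae_abs_le_of_mul_eq_integral_kernel (Real.exp_pos (-lam * t)).ne'
    ((Lp.memLp φ).integrable one_le_two) (hbd t ht) (by
      filter_upwards [hker t ht φ, Lp.coeFn_smul (Real.exp (-lam * t)) φ] with x hker hsmul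
      rw [← hker, heig t ht, hsmul, Pi.smul_apply, smul_eq_mul])
  have hconst : |Real.exp (-lam * t)|⁻¹ * (κ * t ^ (-(ν / 2)) * Real.exp (κ * t)) =
      κ * (2 * Real.exp 1 / ν) ^ (ν / 2) * (lam + κ) ^ (ν / 2) := by
    rw [abs_of_pos (Real.exp_pos _), ← Real.exp_neg, mul_left_comm, mul_assoc, ← Real.exp_add,
      neg_mul, neg_neg, ← add_mul, rpow_neg_mul_exp_at_argmin hlam hν, mul_assoc]
  calc (eLpNorm (φ : U → ℝ) p μ).toReal
      ≤ (μ Set.univ).toReal ^ p.toReal⁻¹ *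
          (κ * (2 * Real.exp 1 / ν) ^ (ν / 2) * (lam + κ) ^ (ν / 2) *
            (μ Set.univ).toReal ^ (1 / 2 : ℝ)) := by
        refine toReal_eLpNorm_le_of_ae_bound (by positivity) ?_
        filter_upwards [hpointwise] with x hx
        rw [Real.norm_eq_abs, ← hconst, mul_assoc]
        exact hx.trans (by gcongr)
    _ = _ := by
        rw [Real.rpow_add' ENNReal.toReal_nonneg (by positivity), one_div p.toReal]
        ring

/-- **Theorem 3.8(1), eigenfunction bounds on Lie groups.** Suppose that for every `t > 0` the
operator `P_t` on `L²(μ)`, `μ(U) < ∞`, is an integral operator with symmetric measurable kernel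
`k_t` satisfying `|k_t| ≤ κ t^{-ν/2} e^{κ t}` a.e. If `φ` is an `L²`-normalized joint
eigenfunction, `P_t φ = e^{-λ t} φ` for all `t > 0`, with `λ + κ > 0`, then for all `p ∈ [1, ∞]`
one has `‖φ‖_{L^p} ≤ μ(U)^{1/p + 1/2} κ (2e/ν)^{ν/2} (λ + κ)^{ν/2}`. -/
theorem stmt13 {U : Type*} [MeasurableSpace U] (μ : Measure U) [IsFiniteMeasure μ]
    (ν κ : ℝ) (hν : 0 < ν) (hκ : 0 < κ)
    (P : ℝ → (Lp ℝ 2 μ →L[ℝ] Lp ℝ 2 μ)) (k : ℝ → U × U → ℝ)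
    (hk : ∀ t : ℝ, 0 < t → Measurable (k t))
    (hsym : ∀ t : ℝ, 0 < t → ∀ᵐ z ∂(μ.prod μ), k t z = k t z.swap)
    (hbd : ∀ t : ℝ, 0 < t →
      ∀ᵐ z ∂(μ.prod μ), |k t z| ≤ κ * t ^ (-(ν / 2)) * Real.exp (κ * t))
    (hker : ∀ t : ℝ, 0 < t →
      ∀ f : Lp ℝ 2 μ, ∀ᵐ x ∂μ, (P t f : U → ℝ) x = ∫ y, k t (x, y) * f y ∂μ)
    (φ : Lp ℝ 2 μ) (hφ : ‖φ‖ = 1) (lam : ℝ) (hlam : 0 < lam + κ)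
    (heig : ∀ t : ℝ, 0 < t → P t φ = Real.exp (-lam * t) • φ) :
    ∀ p : ℝ≥0∞, 1 ≤ p →
      (eLpNorm (φ : U → ℝ) p μ).toReal ≤
        (μ Set.univ).toReal ^ (1 / p.toReal + 1/2) * κ *
          (2 * Real.exp 1 / ν) ^ (ν / 2) * (lam + κ) ^ (ν / 2) :=
  stmt13_general μ ν κ hν hκ P k hbd hker φ hφ lam hlam heig
end
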